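/- arXiv:1901.07198 — 3 statements merged into one kernel-verified Lean document; each statement's English description precedes it below -/
import Mathlib

section
/- The local pressure function x ↦ P_μ(x,f,φ) is defined μ-almost everywhere, is f-invariant (P_μ(f(x),f,φ) = P_μ(x,f,φ) μ-a.e.), and satisfies ∫ P_μ(x,f,φ) dμ = h_μ(f) + ∫ φ dμ, i.e. its integral equals the metric pressure P_μ(f,φ). -/
/-!
Splitting `presSeq` as `entSeq` plus the Birkhoff average `(1/n) S_n φ`, the local pressure is
`P = h_loc + φ*`, where `φ* = lim (1/n) S_n φ` exists μ-a.e. by Birkhoff's ergodic theorem, is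
`f`-invariant and satisfies `∫ φ* = ∫ φ`; hence `∫ P = h_μ(f) + ∫ φ`. Birkhoff's theorem follows
from Garsia's maximal inequality `∫_{sup_n S_n g > 0} g ≥ 0`, applied to `g - b` and `a - g` on the
invariant set where `liminf (1/n) S_n g < a < b < limsup (1/n) S_n g`, which is therefore null.

Exchanging `limsup`/`liminf` with the sum needs `entSeq` to be bounded above μ-a.e. Cover `X` by
`N` balls of radius `ε/2`: the `N^n` cylinders of length-`n` orbit segments through them lie in
dynamical balls, so the points with `μ(B_n(x,ε)) < r^n` have measure at most `(N r)^n`. For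
`r = (2(N+1))⁻¹` this is summable, and Borel–Cantelli applies.
-/

open MeasureTheory Filter Set Topology

/-- The `n`-th dynamical ball of `f` at `x` with radius `ε`. -/
def dynBall {X : Type*} [MetricSpace X] (f : X → X) (x : X) (ε : ℝ) (n : ℕ) : Set X :=
  {y | ∀ i < n, dist (f^[i] x) (f^[i] y) < ε}

/-- The `n`-th Birkhoff sum of `φ` along `f` at `x`. -/
def birkhoffSum' {X : Type*} (f : X → X) (φ : X → ℝ) (n : ℕ) (x : X) : ℝ :=
  ∑ i ∈ Finset.range n, φ (f^[i] x)

/-- The quantity `(-log μ(B_n^f(x,ε)) + S_n^f φ(x)) / n`. -/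
noncomputable def presSeq {X : Type*} [MetricSpace X] [MeasurableSpace X]
    (μ : Measure X) (f : X → X) (φ : X → ℝ) (x : X) (ε : ℝ) (n : ℕ) : ℝ :=
  (-Real.log ((μ (dynBall f x ε n)).toReal) + birkhoffSum' f φ n x) / n

/-- The quantity `(-log μ(B_n^f(x,ε))) / n`. -/
noncomputable def entSeq {X : Type*} [MetricSpace X] [MeasurableSpace X]
    (μ : Measure X) (f : X → X) (x : X) (ε : ℝ) (n : ℕ) : ℝ :=
  (-Real.log ((μ (dynBall f x ε n)).toReal)) / n

open scoped ENNReal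

section LimsupAdd

variable {ι α : Type*} [AddCommGroup α] [ConditionallyCompleteLinearOrder α] [DenselyOrdered α]
  [AddLeftMono α] [TopologicalSpace α] [OrderTopology α] {l : Filter ι} [l.NeBot]
  {u v : ι → α} {c : α}

theorem Filter.limsup_add_of_tendsto (hu_le : IsBoundedUnder (· ≤ ·) l u)
    (hu_ge : IsBoundedUnder (· ≥ ·) l u) (hv : Tendsto v l (𝓝 c)) :
    limsup (u + v) l = limsup u l + c := by
  have hv_le := hv.isBoundedUnder_le
  have hv_ge := hv.isBoundedUnder_ge
  refine le_antisymm ?_ ?_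
  · simpa [hv.limsup_eq] using limsup_add_le hu_ge hu_le hv_ge.isCoboundedUnder_le hv_le
  · simpa [hv.liminf_eq] using le_limsup_add hu_le hu_ge.isCoboundedUnder_le hv_le hv_ge

theorem Filter.liminf_add_of_tendsto (hu_le : IsBoundedUnder (· ≤ ·) l u)
    (hu_ge : IsBoundedUnder (· ≥ ·) l u) (hv : Tendsto v l (𝓝 c)) :
    liminf (u + v) l = liminf u l + c := by
  have hv_le := hv.isBoundedUnder_le
  have hv_ge := hv.isBoundedUnder_ge
  refine le_antisymm ?_ ?_
  · simpa [hv.limsup_eq, add_comm u v, add_comm c] using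
      liminf_add_le hv_ge hv_le hu_ge hu_le.isCoboundedUnder_ge
  · simpa [hv.liminf_eq] using le_liminf_add hu_ge hu_le hv_ge hv_le.isCoboundedUnder_ge

end LimsupAdd

section BirkhoffAverage

variable {X : Type*} {f : X → X} {g : X → ℝ} {C : ℝ}

theorem norm_birkhoffAverage_le (hC : ∀ x, ‖g x‖ ≤ C) (n : ℕ) (x : X) :
    ‖birkhoffAverage ℝ f g n x‖ ≤ C := by
  rcases Nat.eq_zero_or_pos n with rfl | hn
  · simpa using (norm_nonneg _).trans (hC x)
  have hn' : (0 : ℝ) < n := Nat.cast_pos.2 hn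
  calc ‖birkhoffAverage ℝ f g n x‖
      = (n : ℝ)⁻¹ * |∑ k ∈ Finset.range n, g (f^[k] x)| := by
        simp [birkhoffAverage, birkhoffSum, Real.norm_eq_abs]
    _ ≤ (n : ℝ)⁻¹ * ∑ _k ∈ Finset.range n, C := by
        gcongr
        exact (Finset.abs_sum_le_sum_abs _ _).trans
          (Finset.sum_le_sum fun k _ => by simpa using hC _)
    _ = C := by simp [hn'.ne']

theorem isBoundedUnder_le_birkhoffAverage (hC : ∀ x, ‖g x‖ ≤ C) (x : X) :
    IsBoundedUnder (· ≤ ·) atTop (birkhoffAverage ℝ f g · x) :=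
  isBoundedUnder_of ⟨C, fun n => (abs_le.1 (norm_birkhoffAverage_le hC n x)).2⟩

theorem isBoundedUnder_ge_birkhoffAverage (hC : ∀ x, ‖g x‖ ≤ C) (x : X) :
    IsBoundedUnder (· ≥ ·) atTop (birkhoffAverage ℝ f g · x) :=
  isBoundedUnder_of ⟨-C, fun n => (abs_le.1 (norm_birkhoffAverage_le hC n x)).1⟩

theorem birkhoffAverage_sub_const (c : ℝ) {n : ℕ} (hn : n ≠ 0) (x : X) :
    birkhoffAverage ℝ f (fun y => g y - c) n x = birkhoffAverage ℝ f g n x - c := by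
  simp [birkhoffAverage, birkhoffSum, Finset.sum_sub_distrib, mul_sub, hn]

theorem birkhoffAverage_const_sub (c : ℝ) {n : ℕ} (hn : n ≠ 0) (x : X) :
    birkhoffAverage ℝ f (fun y => c - g y) n x = c - birkhoffAverage ℝ f g n x := by
  simp [birkhoffAverage, birkhoffSum, Finset.sum_sub_distrib, mul_sub, hn]

theorem exists_birkhoffSum_pos_of_frequently {x : X}
    (h : ∃ᶠ n in atTop, 0 < birkhoffAverage ℝ f g n x) : ∃ n, 0 < birkhoffSum f g n x := by
  obtain ⟨n, hn⟩ := h.exists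
  exact ⟨n, pos_of_mul_pos_right hn (inv_nonneg.2 n.cast_nonneg)⟩

noncomputable def birkhoffLimsup (f : X → X) (g : X → ℝ) (x : X) : ℝ :=
  limsup (birkhoffAverage ℝ f g · x) atTop

noncomputable def birkhoffLiminf (f : X → X) (g : X → ℝ) (x : X) : ℝ :=
  liminf (birkhoffAverage ℝ f g · x) atTop

theorem tendsto_birkhoffAverage_apply_sub (hC : ∀ x, ‖g x‖ ≤ C) (x : X) :
    Tendsto (fun n => birkhoffAverage ℝ f g n (f x) - birkhoffAverage ℝ f g n x) atTop (𝓝 0) :=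
  tendsto_birkhoffAverage_apply_sub_birkhoffAverage' ℝ
    (isBounded_iff_forall_norm_le.2 ⟨C, forall_mem_range.2 hC⟩) f x

theorem birkhoffLimsup_apply (hC : ∀ x, ‖g x‖ ≤ C) (x : X) :
    birkhoffLimsup f g (f x) = birkhoffLimsup f g x := by
  have h := limsup_add_of_tendsto (isBoundedUnder_le_birkhoffAverage (f := f) hC x)
    (isBoundedUnder_ge_birkhoffAverage hC x) (tendsto_birkhoffAverage_apply_sub (f := f) hC x)
  simp only [add_zero, Pi.add_def, add_sub_cancel] at h
  exact h

theorem birkhoffLiminf_apply (hC : ∀ x, ‖g x‖ ≤ C) (x : X) :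
    birkhoffLiminf f g (f x) = birkhoffLiminf f g x := by
  have h := liminf_add_of_tendsto (isBoundedUnder_le_birkhoffAverage (f := f) hC x)
    (isBoundedUnder_ge_birkhoffAverage hC x) (tendsto_birkhoffAverage_apply_sub (f := f) hC x)
  simp only [add_zero, Pi.add_def, add_sub_cancel] at h
  exact h

theorem exists_birkhoffSum_sub_pos_of_lt_birkhoffLimsup (hC : ∀ x, ‖g x‖ ≤ C) {x : X} {b : ℝ}
    (hb : b < birkhoffLimsup f g x) : ∃ n, 0 < birkhoffSum f (fun y => g y - b) n x :=
  exists_birkhoffSum_pos_of_frequently <|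
    ((frequently_lt_of_lt_limsup (isBoundedUnder_ge_birkhoffAverage hC x).isCoboundedUnder_le
      hb).and_eventually (eventually_ne_atTop 0)).mono fun n ⟨hbn, hn⟩ => by
        rw [birkhoffAverage_sub_const b hn]
        linarith

theorem exists_birkhoffSum_const_sub_pos_of_birkhoffLiminf_lt (hC : ∀ x, ‖g x‖ ≤ C) {x : X}
    {a : ℝ} (ha : birkhoffLiminf f g x < a) : ∃ n, 0 < birkhoffSum f (fun y => a - g y) n x :=
  exists_birkhoffSum_pos_of_frequently <|
    ((frequently_lt_of_liminf_lt (isBoundedUnder_le_birkhoffAverage hC x).isCoboundedUnder_ge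
      ha).and_eventually (eventually_ne_atTop 0)).mono fun n ⟨han, hn⟩ => by
        rw [birkhoffAverage_const_sub a hn]
        linarith

end BirkhoffAverage

section BirkhoffMax

variable {X : Type*} {f : X → X} {g : X → ℝ}

noncomputable def birkhoffMax (f : X → X) (g : X → ℝ) (n : ℕ) : X → ℝ :=
  partialSups (birkhoffSum f g) n

theorem birkhoffSum_le_birkhoffMax {k n : ℕ} (h : k ≤ n) (x : X) :
    birkhoffSum f g k x ≤ birkhoffMax f g n x :=
  le_partialSups_of_le (birkhoffSum f g) h x

theorem birkhoffMax_nonneg (n : ℕ) (x : X) : 0 ≤ birkhoffMax f g n x := by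
  simpa using birkhoffSum_le_birkhoffMax (f := f) (g := g) (Nat.zero_le n) x

theorem monotone_birkhoffMax : Monotone (birkhoffMax f g) :=
  (partialSups (birkhoffSum f g)).monotone

theorem exists_birkhoffSum_eq_birkhoffMax (n : ℕ) (x : X) :
    ∃ k ≤ n, birkhoffSum f g k x = birkhoffMax f g n x := by
  obtain ⟨k, hk, h⟩ :=
    Finset.exists_mem_eq_sup' Finset.nonempty_Iic fun k => birkhoffSum f g k x
  exact ⟨k, Finset.mem_Iic.1 hk, by simp [birkhoffMax, partialSups_apply, Finset.sup'_apply, h]⟩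

theorem exists_birkhoffSum_pos_iff_exists_birkhoffMax_pos (x : X) :
    (∃ n, 0 < birkhoffSum f g n x) ↔ ∃ n, 0 < birkhoffMax f g n x := by
  refine ⟨fun ⟨n, hn⟩ => ⟨n, hn.trans_le (birkhoffSum_le_birkhoffMax le_rfl x)⟩,
    fun ⟨n, hn⟩ => ?_⟩
  obtain ⟨k, -, hk⟩ := exists_birkhoffSum_eq_birkhoffMax (f := f) (g := g) n x
  exact ⟨k, hk ▸ hn⟩

theorem birkhoffMax_le_max_zero (n : ℕ) (x : X) :
    birkhoffMax f g n x ≤ max 0 (g x + birkhoffMax f g n (f x)) := by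
  refine partialSups_le _ n (fun x => max 0 (g x + birkhoffMax f g n (f x)))
    (fun k hk x => ?_) x
  rcases k with _ | k
  · simp
  · rw [birkhoffSum_succ']
    exact le_max_of_le_right (by gcongr; exact birkhoffSum_le_birkhoffMax (by omega) _)

end BirkhoffMax

section MeasurePreserving

variable {X : Type*} [MeasurableSpace X] {μ : Measure X} {f : X → X} {g : X → ℝ} {C : ℝ}

theorem Measurable.birkhoffAverage (hf : Measurable f) (hg : Measurable g) (n : ℕ) :
    Measurable (birkhoffAverage ℝ f g n) :=
  (Finset.measurable_sum _ fun i _ => hg.comp (hf.iterate i)).const_smul ((n : ℝ)⁻¹)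

theorem Measurable.birkhoffLimsup (hf : Measurable f) (hg : Measurable g) :
    Measurable (birkhoffLimsup f g) :=
  .limsup (hf.birkhoffAverage hg)

theorem Measurable.birkhoffLiminf (hf : Measurable f) (hg : Measurable g) :
    Measurable (birkhoffLiminf f g) :=
  .liminf (hf.birkhoffAverage hg)

namespace MeasureTheory.MeasurePreserving

theorem integral_comp_self (hf : MeasurePreserving f μ μ) (hg : AEStronglyMeasurable g μ) :
    ∫ x, g (f x) ∂μ = ∫ x, g x ∂μ := by
  rw [← integral_map hf.measurable.aemeasurable (by rwa [hf.map_eq]), hf.map_eq]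

theorem integrable_comp_iterate (hf : MeasurePreserving f μ μ) (hg : Integrable g μ) (n : ℕ) :
    Integrable (fun x => g (f^[n] x)) μ :=
  ((hf.iterate n).integrable_comp hg.1).2 hg

theorem integrable_birkhoffSum (hf : MeasurePreserving f μ μ) (hg : Integrable g μ) (n : ℕ) :
    Integrable (birkhoffSum f g n) μ :=
  integrable_finsetSum _ fun i _ => hf.integrable_comp_iterate hg i

theorem integral_birkhoffSum (hf : MeasurePreserving f μ μ) (hg : Integrable g μ) (n : ℕ) :
    ∫ x, birkhoffSum f g n x ∂μ = n * ∫ x, g x ∂μ := by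
  simp only [birkhoffSum]
  rw [integral_finsetSum _ fun i _ => hf.integrable_comp_iterate hg i]
  simp [(hf.iterate _).integral_comp_self hg.1]

theorem integral_birkhoffAverage (hf : MeasurePreserving f μ μ) (hg : Integrable g μ) {n : ℕ}
    (hn : n ≠ 0) : ∫ x, birkhoffAverage ℝ f g n x ∂μ = ∫ x, g x ∂μ := by
  simp only [birkhoffAverage, smul_eq_mul]
  rw [integral_const_mul, hf.integral_birkhoffSum hg,
    inv_mul_cancel_left₀ (Nat.cast_ne_zero.2 hn)]

theorem integrable_birkhoffMax (hf : MeasurePreserving f μ μ) (hg : Integrable g μ) (n : ℕ) :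
    Integrable (birkhoffMax f g n) μ := by
  induction n with
  | zero => simp [birkhoffMax]
  | succ n ih =>
    simpa only [birkhoffMax, partialSups_add_one] using ih.sup (hf.integrable_birkhoffSum hg _)

/-- Garsia's proof: on `{birkhoffMax f g n > 0}` one has
`birkhoffMax f g n ≤ g + birkhoffMax f g n ∘ f`, and `f` preserves the integral of the
nonnegative function `birkhoffMax f g n`. -/
theorem setIntegral_birkhoffMax_pos_nonneg (hf : MeasurePreserving f μ μ) (hg : Integrable g μ)
    (n : ℕ) : 0 ≤ ∫ x in {x | 0 < birkhoffMax f g n x}, g x ∂μ := by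
  set M := birkhoffMax f g n
  set A := {x | 0 < M x}
  have hM : Integrable M μ := hf.integrable_birkhoffMax hg n
  have hMf : Integrable (fun x => M (f x)) μ := hf.integrable_comp_iterate hM 1
  have hle : ∀ x ∈ A, M x - M (f x) ≤ g x := fun x hx => by
    have := (le_max_iff.1 (birkhoffMax_le_max_zero (f := f) (g := g) n x)).resolve_left
      (not_le.2 hx)
    linarith
  calc (0 : ℝ) = ∫ x, M x ∂μ - ∫ x, M (f x) ∂μ := by rw [hf.integral_comp_self hM.1, sub_self]
    _ ≤ ∫ x in A, M x ∂μ - ∫ x in A, M (f x) ∂μ := by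
      rw [setIntegral_eq_integral_of_forall_compl_eq_zero (f := M) (s := A) fun x hx =>
        le_antisymm (not_lt.1 hx) (birkhoffMax_nonneg n x)]
      linarith [setIntegral_le_integral (s := A) hMf
        (ae_of_all _ fun x => birkhoffMax_nonneg n (f x))]
    _ = ∫ x in A, (M x - M (f x)) ∂μ := (integral_sub hM.integrableOn hMf.integrableOn).symm
    _ ≤ ∫ x in A, g x ∂μ := setIntegral_mono_on₀ (hM.sub hMf).integrableOn hg.integrableOn
      (nullMeasurableSet_lt aemeasurable_const hM.aemeasurable) hle

theorem setIntegral_exists_birkhoffSum_pos_nonneg (hf : MeasurePreserving f μ μ)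
    (hg : Integrable g μ) : 0 ≤ ∫ x in {x | ∃ n, 0 < birkhoffSum f g n x}, g x ∂μ := by
  have hset : {x | ∃ n, 0 < birkhoffSum f g n x} = ⋃ n, {x | 0 < birkhoffMax f g n x} := by
    ext x
    simp [exists_birkhoffSum_pos_iff_exists_birkhoffMax_pos]
  rw [hset]
  refine ge_of_tendsto (tendsto_setIntegral_of_monotone₀ (fun n => ?_) (fun m n hmn x hx => ?_)
    hg.integrableOn) (Eventually.of_forall (hf.setIntegral_birkhoffMax_pos_nonneg hg))
  · exact nullMeasurableSet_lt aemeasurable_const (hf.integrable_birkhoffMax hg n).aemeasurable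
  · exact lt_of_lt_of_le hx (monotone_birkhoffMax hmn x)

theorem setIntegral_nonneg_of_preimage_eq (hf : MeasurePreserving f μ μ) (hg : Integrable g μ)
    {s : Set X} (hs : MeasurableSet s) (hfs : f ⁻¹' s = s)
    (hpos : ∀ x ∈ s, ∃ n, 0 < birkhoffSum f g n x) : 0 ≤ ∫ x in s, g x ∂μ := by
  have hiter : ∀ k x, f^[k] x ∈ s ↔ x ∈ s := fun k x => by
    rw [← mem_preimage, preimage_iterate_eq, Function.iterate_fixed hfs]
  have hsum : ∀ n x, birkhoffSum f (s.indicator g) n x = s.indicator (birkhoffSum f g n) x := by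
    intro n x
    by_cases hx : x ∈ s <;> simp [birkhoffSum, hx, hiter]
  have hset : {x | ∃ n, 0 < birkhoffSum f (s.indicator g) n x} = s := by
    ext x
    by_cases hx : x ∈ s <;> simp [hsum, hx, hpos x]
  have := hf.setIntegral_exists_birkhoffSum_pos_nonneg (hg.indicator hs)
  rwa [hset, setIntegral_indicator hs, inter_self] at this

theorem measure_birkhoffLiminf_lt_lt_birkhoffLimsup [IsFiniteMeasure μ]
    (hf : MeasurePreserving f μ μ) (hg : Measurable g) (hC : ∀ x, ‖g x‖ ≤ C) {a b : ℝ}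
    (hab : a < b) : μ {x | birkhoffLiminf f g x < a ∧ b < birkhoffLimsup f g x} = 0 := by
  set s := {x | birkhoffLiminf f g x < a ∧ b < birkhoffLimsup f g x}
  have hs : MeasurableSet s :=
    (measurableSet_lt (hf.measurable.birkhoffLiminf hg) measurable_const).inter
      (measurableSet_lt measurable_const (hf.measurable.birkhoffLimsup hg))
  have hfs : f ⁻¹' s = s := by
    ext x
    simp [s, birkhoffLiminf_apply hC, birkhoffLimsup_apply hC]
  have hint : Integrable g μ := .of_bound hg.aestronglyMeasurable C (ae_of_all _ hC)
  have hint_b : Integrable (fun x => g x - b) μ := hint.sub (integrable_const b)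
  have hint_a : Integrable (fun x => a - g x) μ := (integrable_const a).sub hint
  have h_above : 0 ≤ ∫ x in s, (g x - b) ∂μ := hf.setIntegral_nonneg_of_preimage_eq hint_b hs hfs
    fun x hx => exists_birkhoffSum_sub_pos_of_lt_birkhoffLimsup hC hx.2
  have h_below : 0 ≤ ∫ x in s, (a - g x) ∂μ := hf.setIntegral_nonneg_of_preimage_eq hint_a hs hfs
    fun x hx => exists_birkhoffSum_const_sub_pos_of_birkhoffLiminf_lt hC hx.1
  have hsum : ∫ x in s, (g x - b) ∂μ + ∫ x in s, (a - g x) ∂μ = μ.real s * (a - b) := by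
    rw [← integral_add hint_b.integrableOn hint_a.integrableOn]
    simp
  have : μ.real s ≤ 0 := by nlinarith [measureReal_nonneg (μ := μ) (s := s)]
  exact (measureReal_eq_zero_iff).1 (le_antisymm this measureReal_nonneg)

theorem ae_tendsto_birkhoffAverage [IsFiniteMeasure μ] (hf : MeasurePreserving f μ μ)
    (hg : Measurable g) (hC : ∀ x, ‖g x‖ ≤ C) :
    ∀ᵐ x ∂μ, Tendsto (birkhoffAverage ℝ f g · x) atTop (𝓝 (birkhoffLimsup f g x)) := by
  have hnull : ∀ᵐ x ∂μ, ∀ a b : ℚ, a < b →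
      ¬(birkhoffLiminf f g x < a ∧ (b : ℝ) < birkhoffLimsup f g x) := by
    refine ae_all_iff.2 fun a => ae_all_iff.2 fun b => ?_
    by_cases hab : a < b
    · exact (measure_eq_zero_iff_ae_notMem.1 (hf.measure_birkhoffLiminf_lt_lt_birkhoffLimsup hg
        hC (Rat.cast_lt.2 hab))).mono fun x hx _ => hx
    · exact ae_of_all _ fun x h => absurd h hab
  filter_upwards [hnull] with x hx
  have h_le := isBoundedUnder_le_birkhoffAverage (f := f) hC x
  have h_ge := isBoundedUnder_ge_birkhoffAverage (f := f) hC x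
  refine tendsto_of_liminf_eq_limsup (le_antisymm (liminf_le_limsup h_le h_ge) ?_) rfl h_le h_ge
  by_contra! hlt
  obtain ⟨a, hxa, hab⟩ := exists_rat_btwn hlt
  obtain ⟨b, hab, hbx⟩ := exists_rat_btwn hab
  exact hx a b (Rat.cast_lt.1 hab) ⟨hxa, hbx⟩

theorem integrable_birkhoffLimsup [IsFiniteMeasure μ] (hf : MeasurePreserving f μ μ)
    (hg : Measurable g) (hC : ∀ x, ‖g x‖ ≤ C) : Integrable (birkhoffLimsup f g) μ := by
  refine .of_bound (hf.measurable.birkhoffLimsup hg).aestronglyMeasurable C ?_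
  filter_upwards [hf.ae_tendsto_birkhoffAverage hg hC] with x hx
  exact le_of_tendsto' hx.norm fun n => norm_birkhoffAverage_le hC n x

theorem integral_birkhoffLimsup [IsFiniteMeasure μ] (hf : MeasurePreserving f μ μ)
    (hg : Measurable g) (hC : ∀ x, ‖g x‖ ≤ C) :
    ∫ x, birkhoffLimsup f g x ∂μ = ∫ x, g x ∂μ := by
  have hint : Integrable g μ := .of_bound hg.aestronglyMeasurable C (ae_of_all _ hC)
  refine tendsto_nhds_unique (tendsto_integral_of_dominated_convergence (fun _ => C)
    (fun n => (hf.measurable.birkhoffAverage hg n).aestronglyMeasurable) (integrable_const C)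
    (fun n => ae_of_all _ (norm_birkhoffAverage_le hC n)) (hf.ae_tendsto_birkhoffAverage hg hC)) ?_
  exact tendsto_const_nhds.congr' <| (eventually_ne_atTop 0).mono fun n hn =>
    (hf.integral_birkhoffAverage hint hn).symm

end MeasureTheory.MeasurePreserving

end MeasurePreserving

section CountingSmallBalls

variable {X : Type*} [MeasurableSpace X]

theorem measure_setOf_measure_lt_le (μ : Measure X) {ι : Type*} [Fintype ι] (C : ι → Set X)
    (B : X → Set X) (hcov : ∀ x, ∃ i, x ∈ C i ∧ C i ⊆ B x) (b : ℝ≥0∞) :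
    μ {x | μ (B x) < b} ≤ Fintype.card ι * b := by
  classical
  set T := Finset.univ.filter fun i => μ (C i) < b
  calc μ {x | μ (B x) < b} ≤ μ (⋃ i ∈ T, C i) := measure_mono fun x hx => by
        obtain ⟨i, hxi, hi⟩ := hcov x
        exact mem_biUnion (Finset.mem_filter.2 ⟨Finset.mem_univ _,
          (measure_mono hi).trans_lt hx⟩) hxi
    _ ≤ ∑ i ∈ T, μ (C i) := measure_biUnion_finset_le T C
    _ ≤ ∑ _i ∈ T, b := Finset.sum_le_sum fun i hi => (Finset.mem_filter.1 hi).2.le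
    _ = T.card * b := by rw [Finset.sum_const, nsmul_eq_mul]
    _ ≤ Fintype.card ι * b := by gcongr; exact T.card_le_univ

end CountingSmallBalls

section DynamicalBalls

variable {X : Type*} [MetricSpace X] {f : X → X}

theorem dynBall_mono {x : X} {ε₁ ε₂ : ℝ} (h : ε₁ ≤ ε₂) (n : ℕ) :
    dynBall f x ε₁ n ⊆ dynBall f x ε₂ n :=
  fun _ hy i hi => (hy i hi).trans_le h

variable [MeasurableSpace X]

theorem exists_measure_setOf_measure_dynBall_lt_le [CompactSpace X] (μ : Measure X)
    (f : X → X) {ε : ℝ} (hε : 0 < ε) :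
    ∃ N : ℕ, ∀ n (b : ℝ≥0∞), μ {x | μ (dynBall f x ε n) < b} ≤ N ^ n * b := by
  obtain ⟨t, -, ht, hcover⟩ :=
    finite_cover_balls_of_compact (isCompact_univ (X := X)) (half_pos hε)
  have : Fintype t := ht.fintype
  have hc : ∀ y : X, ∃ c : t, y ∈ Metric.ball (c : X) (ε / 2) := fun y => by
    obtain ⟨c, hc, hy⟩ := mem_iUnion₂.1 (hcover (mem_univ y))
    exact ⟨⟨c, hc⟩, hy⟩
  choose c hc using hc
  refine ⟨Fintype.card t, fun n b => ?_⟩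
  set C : (Fin n → t) → Set X :=
    fun w => {y | ∀ i : Fin n, f^[i] y ∈ Metric.ball (w i : X) (ε / 2)}
  have hcov : ∀ x, ∃ w, x ∈ C w ∧ C w ⊆ dynBall f x ε n := fun x =>
    ⟨fun i => c (f^[i] x), fun i => hc _, fun y hy i hi => by
      have hx := Metric.mem_ball.1 (hc (f^[i] x))
      have hy := Metric.mem_ball.1 (hy ⟨i, hi⟩)
      linarith [dist_triangle_right (f^[i] x) (f^[i] y) (c (f^[i] x))]⟩
  simpa [Fintype.card_fun] using measure_setOf_measure_lt_le μ C (fun x => dynBall f x ε n) hcov b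

theorem ae_eventually_pow_le_measure_dynBall [CompactSpace X] (μ : Measure X) (f : X → X)
    {ε : ℝ} (hε : 0 < ε) :
    ∃ r : ℝ, 0 < r ∧ ∀ᵐ x ∂μ, ∀ᶠ n in atTop, ENNReal.ofReal (r ^ n) ≤ μ (dynBall f x ε n) := by
  obtain ⟨N, hN⟩ := exists_measure_setOf_measure_dynBall_lt_le μ f hε
  set r : ℝ := (2 * (N + 1))⁻¹
  have hr : 0 < r := by positivity
  have hNr : (N : ℝ) * r ≤ 1 / 2 := by
    rw [mul_comm, ← div_eq_inv_mul, div_le_iff₀ (by positivity)]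
    linarith
  have hsum : ∑' n, μ {x | μ (dynBall f x ε n) < ENNReal.ofReal (r ^ n)} ≠ ⊤ := by
    refine ne_top_of_le_ne_top (b := ∑' n : ℕ, ENNReal.ofReal ((1 / 2) ^ n)) ?_
      (ENNReal.tsum_le_tsum fun n => (hN n _).trans ?_)
    · rw [← ENNReal.ofReal_tsum_of_nonneg (fun n => by positivity) summable_geometric_two]
      exact ENNReal.ofReal_ne_top
    · rw [← ENNReal.ofReal_natCast, ← ENNReal.ofReal_pow N.cast_nonneg,
        ← ENNReal.ofReal_mul (by positivity), ← mul_pow]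
      exact ENNReal.ofReal_le_ofReal (pow_le_pow_left₀ (by positivity) hNr n)
  exact ⟨r, hr, (ae_eventually_notMem hsum).mono fun x hx => hx.mono fun n hn => not_lt.1 hn⟩

variable {μ : Measure X} {x : X} {ε : ℝ}

theorem entSeq_nonneg [IsProbabilityMeasure μ] (n : ℕ) : 0 ≤ entSeq μ f x ε n :=
  div_nonneg (neg_nonneg.2 (Real.log_nonpos ENNReal.toReal_nonneg measureReal_le_one))
    n.cast_nonneg

theorem entSeq_le_of_pow_le [IsFiniteMeasure μ] {r : ℝ} (hr : 0 < r) {n : ℕ} (hn : n ≠ 0)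
    (h : ENNReal.ofReal (r ^ n) ≤ μ (dynBall f x ε n)) : entSeq μ f x ε n ≤ -Real.log r := by
  have hμ : r ^ n ≤ (μ (dynBall f x ε n)).toReal :=
    (ENNReal.ofReal_le_iff_le_toReal (measure_ne_top _ _)).1 h
  have hlog : n * Real.log r ≤ Real.log (μ (dynBall f x ε n)).toReal := by
    rw [← Real.log_pow]
    exact Real.log_le_log (by positivity) hμ
  rw [entSeq, div_le_iff₀ (by positivity)]
  linarith

theorem ae_isBoundedUnder_entSeq [CompactSpace X] (μ : Measure X) [IsFiniteMeasure μ]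
    (f : X → X) : ∀ᵐ x ∂μ, ∀ ε > 0, IsBoundedUnder (· ≤ ·) atTop (entSeq μ f x ε) := by
  choose r hr hae using fun k : ℕ =>
    ae_eventually_pow_le_measure_dynBall μ f (Nat.one_div_pos_of_nat (α := ℝ) (n := k))
  filter_upwards [ae_all_iff.2 hae] with x hx ε hε
  obtain ⟨k, hk⟩ := exists_nat_one_div_lt hε
  refine isBoundedUnder_of_eventually_le (a := -Real.log (r k)) ?_
  filter_upwards [hx k, eventually_ne_atTop 0] with n hn hn0
  exact entSeq_le_of_pow_le (hr k) hn0 (hn.trans (measure_mono (dynBall_mono hk.le n)))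

theorem presSeq_eq_entSeq_add (φ : X → ℝ) :
    presSeq μ f φ x ε = entSeq μ f x ε + (birkhoffAverage ℝ f φ · x) := by
  ext n
  simp only [presSeq, entSeq, Pi.add_apply, birkhoffAverage, birkhoffSum', birkhoffSum,
    smul_eq_mul]
  ring

theorem limsup_presSeq [IsProbabilityMeasure μ] {φ : X → ℝ} {c : ℝ}
    (hbdd : IsBoundedUnder (· ≤ ·) atTop (entSeq μ f x ε))
    (hφ : Tendsto (birkhoffAverage ℝ f φ · x) atTop (𝓝 c)) :
    limsup (presSeq μ f φ x ε) atTop = limsup (entSeq μ f x ε) atTop + c := by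
  rw [presSeq_eq_entSeq_add]
  exact limsup_add_of_tendsto hbdd (isBoundedUnder_of ⟨0, entSeq_nonneg⟩) hφ

theorem liminf_presSeq [IsProbabilityMeasure μ] {φ : X → ℝ} {c : ℝ}
    (hbdd : IsBoundedUnder (· ≤ ·) atTop (entSeq μ f x ε))
    (hφ : Tendsto (birkhoffAverage ℝ f φ · x) atTop (𝓝 c)) :
    liminf (presSeq μ f φ x ε) atTop = liminf (entSeq μ f x ε) atTop + c := by
  rw [presSeq_eq_entSeq_add]
  exact liminf_add_of_tendsto hbdd (isBoundedUnder_of ⟨0, entSeq_nonneg⟩) hφ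

end DynamicalBalls

theorem local_pressure_formula_general {X : Type*} [MetricSpace X] [CompactSpace X]
    [MeasurableSpace X] [BorelSpace X]
    (μ : Measure X) [IsProbabilityMeasure μ]
    (f : X → X) (hinv : MeasurePreserving f μ μ)
    (φ : X → ℝ) (hφ : Continuous φ)
    (hKS : ℝ)  -- the Kolmogorov–Sinai (metric) entropy `h_μ(f)`
    (hloc : X → ℝ)
    -- Brin–Katok theorem for the local entropy, assumed:
    (hBK : ∀ᵐ x ∂μ,
      Tendsto (fun ε : ℝ => limsup (fun n : ℕ => entSeq μ f x ε n) atTop)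
        (𝓝[>] 0) (𝓝 (hloc x)) ∧
      Tendsto (fun ε : ℝ => liminf (fun n : ℕ => entSeq μ f x ε n) atTop)
        (𝓝[>] 0) (𝓝 (hloc x)))
    (hlocInv : ∀ᵐ x ∂μ, hloc (f x) = hloc x)
    (hlocInt : Integrable hloc μ)
    (hlocEnt : ∫ x, hloc x ∂μ = hKS) :
    ∃ P : X → ℝ,
      -- the local pressure is defined μ-almost everywhere:
      (∀ᵐ x ∂μ,
        Tendsto (fun ε : ℝ => limsup (fun n : ℕ => presSeq μ f φ x ε n) atTop)
          (𝓝[>] 0) (𝓝 (P x)) ∧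
        Tendsto (fun ε : ℝ => liminf (fun n : ℕ => presSeq μ f φ x ε n) atTop)
          (𝓝[>] 0) (𝓝 (P x))) ∧
      -- it is f-invariant μ-almost everywhere:
      (∀ᵐ x ∂μ, P (f x) = P x) ∧
      -- and its integral is the metric pressure:
      Integrable P μ ∧ ∫ x, P x ∂μ = hKS + ∫ x, φ x ∂μ := by
  obtain ⟨C, hC⟩ := isCompact_univ.exists_bound_of_continuousOn hφ.continuousOn
  replace hC : ∀ x, ‖φ x‖ ≤ C := fun x => hC x (mem_univ x)
  have hφm : Measurable φ := hφ.measurable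
  refine ⟨fun x => hloc x + birkhoffLimsup f φ x, ?_, ?_,
    hlocInt.add (hinv.integrable_birkhoffLimsup hφm hC), ?_⟩
  · filter_upwards [hBK, ae_isBoundedUnder_entSeq μ f, hinv.ae_tendsto_birkhoffAverage hφm hC]
      with x hx hbdd hlim
    refine ⟨(hx.1.add_const _).congr' ?_, (hx.2.add_const _).congr' ?_⟩ <;>
      filter_upwards [self_mem_nhdsWithin] with ε hε
    · exact (limsup_presSeq (hbdd ε hε) hlim).symm
    · exact (liminf_presSeq (hbdd ε hε) hlim).symm
  · filter_upwards [hlocInv] with x hx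
    rw [hx, birkhoffLimsup_apply hC]
  · rw [integral_add hlocInt (hinv.integrable_birkhoffLimsup hφm hC), hlocEnt,
      hinv.integral_birkhoffLimsup hφm hC]

theorem local_pressure_formula {X : Type*} [MetricSpace X] [CompactSpace X]
    [MeasurableSpace X] [BorelSpace X]
    (μ : Measure X) [IsProbabilityMeasure μ] [NullSingletonClass μ]
    (f : X → X) (hf : Continuous f) (hinv : MeasurePreserving f μ μ)
    (φ : X → ℝ) (hφ : Continuous φ)
    (hKS : ℝ)  -- the Kolmogorov–Sinai (metric) entropy `h_μ(f)`
    (hloc : X → ℝ)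
    -- Brin–Katok theorem for the local entropy, assumed:
    (hBK : ∀ᵐ x ∂μ,
      Tendsto (fun ε : ℝ => limsup (fun n : ℕ => entSeq μ f x ε n) atTop)
        (𝓝[>] 0) (𝓝 (hloc x)) ∧
      Tendsto (fun ε : ℝ => liminf (fun n : ℕ => entSeq μ f x ε n) atTop)
        (𝓝[>] 0) (𝓝 (hloc x)))
    (hlocInv : ∀ᵐ x ∂μ, hloc (f x) = hloc x)
    (hlocInt : Integrable hloc μ)
    (hlocEnt : ∫ x, hloc x ∂μ = hKS) :
    ∃ P : X → ℝ,
      -- the local pressure is defined μ-almost everywhere: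
      (∀ᵐ x ∂μ,
        Tendsto (fun ε : ℝ => limsup (fun n : ℕ => presSeq μ f φ x ε n) atTop)
          (𝓝[>] 0) (𝓝 (P x)) ∧
        Tendsto (fun ε : ℝ => liminf (fun n : ℕ => presSeq μ f φ x ε n) atTop)
          (𝓝[>] 0) (𝓝 (P x))) ∧
      -- it is f-invariant μ-almost everywhere:
      (∀ᵐ x ∂μ, P (f x) = P x) ∧
      -- and its integral is the metric pressure:
      Integrable P μ ∧ ∫ x, P x ∂μ = hKS + ∫ x, φ x ∂μ :=
  local_pressure_formula_general μ f hinv φ hφ hKS hloc hBK hlocInv hlocInt hlocEnt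
end

section
/- If μ is a weak-Gibbs measure for f with respect to φ and P_top(f,φ) is finite, then for μ-almost every x ∈ X the local pressure equals the topological pressure: P_μ(x,f,φ) = P_top(f,φ). -/
open MeasureTheory Filter Set Topology

/-- `μ` is a weak-Gibbs measure for `f` with respect to `φ`, where `P` is the
topological pressure `P_top(f,φ)` (assumed finite). -/
def IsWeakGibbs {X : Type*} [MetricSpace X] [MeasurableSpace X]
    (μ : Measure X) (f : X → X) (φ : X → ℝ) (P : ℝ) : Prop :=
  ∃ ε₀ > (0 : ℝ), ∃ Λ : Set X, μ Λᶜ = 0 ∧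
    ∀ ε : ℝ, 0 < ε → ε < ε₀ → ∀ x ∈ Λ, ∃ δ : ℕ → ℝ,
      (∀ n, 0 < δ n) ∧
      Tendsto (fun n : ℕ => Real.log (δ n) / n) atTop (𝓝 0) ∧
      ∀ n : ℕ,
        (δ n)⁻¹ ≤ (μ (dynBall f x ε n)).toReal / Real.exp (-(P * n) + birkhoffSum' f φ n x) ∧
        (μ (dynBall f x ε n)).toReal / Real.exp (-(P * n) + birkhoffSum' f φ n x) ≤ δ n

/-! The weak-Gibbs bounds say that `log μ(B_n(x,ε)) = -n P + S_n φ(x) + O(log δ_n)` with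
`log δ_n = o(n)`; dividing by `n`, the local pressure sequence converges to `P` for every small `ε`,
so its `limsup` and `liminf` are constant equal to `P` near `ε = 0`. -/

theorem abs_log_sub_le_log_of_inv_le_div_exp_le {a t δ : ℝ} (hδ : 0 < δ)
    (hlow : δ⁻¹ ≤ a / Real.exp t) (hup : a / Real.exp t ≤ δ) :
    |Real.log a - t| ≤ Real.log δ := by
  have hpos : 0 < a / Real.exp t := (inv_pos.mpr hδ).trans_le hlow
  have ha : 0 < a := by simpa using mul_pos hpos (Real.exp_pos t)
  have hlog_low := Real.log_le_log (inv_pos.mpr hδ) hlow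
  have hlog_up := Real.log_le_log hpos hup
  rw [Real.log_div ha.ne' (Real.exp_pos t).ne', Real.log_exp] at hlog_low hlog_up
  rw [Real.log_inv] at hlog_low
  exact abs_le.mpr ⟨by linarith, hlog_up⟩

theorem tendsto_neg_log_add_div_of_inv_le_div_exp_le {a s δ : ℕ → ℝ} {P : ℝ}
    (hδ : ∀ n, 0 < δ n) (hδlog : Tendsto (fun n : ℕ => Real.log (δ n) / n) atTop (𝓝 0))
    (hbounds : ∀ n : ℕ, (δ n)⁻¹ ≤ a n / Real.exp (-(P * n) + s n) ∧
      a n / Real.exp (-(P * n) + s n) ≤ δ n) :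
    Tendsto (fun n : ℕ => (-Real.log (a n) + s n) / n) atTop (𝓝 P) := by
  set e : ℕ → ℝ := fun n => Real.log (a n) - (-(P * n) + s n)
  have he_le : ∀ n, |e n / n| ≤ Real.log (δ n) / n := fun n => by
    rw [abs_div, Nat.abs_cast]
    exact div_le_div_of_nonneg_right
      (abs_log_sub_le_log_of_inv_le_div_exp_le (hδ n) (hbounds n).1 (hbounds n).2) n.cast_nonneg
  have he : Tendsto (fun n : ℕ => e n / n) atTop (𝓝 0) :=
    squeeze_zero_norm he_le hδlog
  have hlim : Tendsto (fun n : ℕ => P - e n / n) atTop (𝓝 P) := by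
    simpa using tendsto_const_nhds.sub he
  refine hlim.congr' ?_
  filter_upwards [eventually_ne_atTop 0] with n hn
  have hn' : (n : ℝ) ≠ 0 := Nat.cast_ne_zero.mpr hn
  field_simp
  ring

theorem tendsto_limsup_liminf_nhdsGT_of_tendsto {u : ℝ → ℕ → ℝ} {P ε₀ : ℝ} (hε₀ : 0 < ε₀)
    (hu : ∀ ε, 0 < ε → ε < ε₀ → Tendsto (u ε) atTop (𝓝 P)) :
    Tendsto (fun ε => limsup (u ε) atTop) (𝓝[>] 0) (𝓝 P) ∧
      Tendsto (fun ε => liminf (u ε) atTop) (𝓝[>] 0) (𝓝 P) := by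
  have hsmall : ∀ᶠ ε in 𝓝[>] (0 : ℝ), ε ∈ Ioo 0 ε₀ :=
    Ioo_mem_nhdsGT_of_mem ⟨le_rfl, hε₀⟩
  constructor
  · refine tendsto_const_nhds.congr' ?_
    filter_upwards [hsmall] with ε hε
    exact (hu ε hε.1 hε.2).limsup_eq.symm
  · refine tendsto_const_nhds.congr' ?_
    filter_upwards [hsmall] with ε hε
    exact (hu ε hε.1 hε.2).liminf_eq.symm

theorem weakGibbs_local_pressure_eq_top_pressure_general {X : Type*} [MetricSpace X]
    [MeasurableSpace X] (μ : Measure X) (f : X → X) (φ : X → ℝ)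
    (Ptop : ℝ)  -- the (finite) topological pressure `P_top(f,φ)`
    (hGibbs : IsWeakGibbs μ f φ Ptop) :
    ∀ᵐ x ∂μ,
      Tendsto (fun ε : ℝ => limsup (fun n : ℕ => presSeq μ f φ x ε n) atTop)
        (𝓝[>] 0) (𝓝 Ptop) ∧
      Tendsto (fun ε : ℝ => liminf (fun n : ℕ => presSeq μ f φ x ε n) atTop)
        (𝓝[>] 0) (𝓝 Ptop) := by
  obtain ⟨ε₀, hε₀, Λ, hΛ, hbounds⟩ := hGibbs
  filter_upwards [mem_ae_iff.mpr hΛ] with x hx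
  refine tendsto_limsup_liminf_nhdsGT_of_tendsto hε₀ fun ε hε hεε₀ => ?_
  obtain ⟨δ, hδ, hδlog, hδbounds⟩ := hbounds ε hε hεε₀ x hx
  exact tendsto_neg_log_add_div_of_inv_le_div_exp_le hδ hδlog hδbounds

theorem weakGibbs_local_pressure_eq_top_pressure {X : Type*} [MetricSpace X] [CompactSpace X]
    [MeasurableSpace X] [BorelSpace X]
    (μ : Measure X) [IsProbabilityMeasure μ] [NullSingletonClass μ]
    (f : X → X) (hf : Continuous f) (hinv : MeasurePreserving f μ μ)
    (φ : X → ℝ) (hφ : Continuous φ)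
    (Ptop : ℝ)  -- the (finite) topological pressure `P_top(f,φ)`
    (hGibbs : IsWeakGibbs μ f φ Ptop) :
    ∀ᵐ x ∂μ,
      Tendsto (fun ε : ℝ => limsup (fun n : ℕ => presSeq μ f φ x ε n) atTop)
        (𝓝[>] 0) (𝓝 Ptop) ∧
      Tendsto (fun ε : ℝ => liminf (fun n : ℕ => presSeq μ f φ x ε n) atTop)
        (𝓝[>] 0) (𝓝 Ptop) :=
  weakGibbs_local_pressure_eq_top_pressure_general μ f φ Ptop hGibbs
end

section
/- Let f : X → X be a continuous map on a compact metric space with finite topological entropy, preserving a Borel non-atomic probability measure μ, and let φ : X → ℝ be continuous. If μ is a weak-Gibbs measure for f with respect to φ, then μ is an equilibrium state, i.e. h_μ(f) + ∫ φ dμ = P_top(f,φ). -/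
open MeasureTheory Filter Set Topology

/-!
The weak-Gibbs bounds say that `μ(B_n^f(x,ε))` equals `exp(-n P_top + S_n^f φ(x))` up to a
subexponential factor, so the local pressure sequence converges to `P_top` for every small `ε` at
almost every `x`. Hence the local pressure is a.e. equal to `P_top`, and integrating it gives
`h_μ(f) + ∫ φ dμ = P_top` by the local pressure formula.
-/

lemma tendsto_log_div_atTop_zero_of_inv_le_of_le {r δ : ℕ → ℝ} (hδ : ∀ n, 0 < δ n)
    (hδlim : Tendsto (fun n : ℕ => Real.log (δ n) / n) atTop (𝓝 0))
    (hlow : ∀ n, (δ n)⁻¹ ≤ r n) (hup : ∀ n, r n ≤ δ n) :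
    Tendsto (fun n : ℕ => Real.log (r n) / n) atTop (𝓝 0) := by
  refine tendsto_of_tendsto_of_tendsto_of_le_of_le (by simpa using hδlim.neg) hδlim
    (fun n => ?_) (fun n => ?_)
  · have hlog := Real.log_le_log (inv_pos.mpr (hδ n)) (hlow n)
    rw [Real.log_inv] at hlog
    simpa only [neg_div] using div_le_div_of_nonneg_right hlog n.cast_nonneg
  · exact div_le_div_of_nonneg_right
      (Real.log_le_log ((inv_pos.mpr (hδ n)).trans_le (hlow n)) (hup n)) n.cast_nonneg

section

variable {X : Type*} [MetricSpace X] [MeasurableSpace X] {μ : Measure X} {f : X → X}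
  {φ : X → ℝ}

lemma presSeq_eq_sub_log_div {x : X} {ε : ℝ} {n : ℕ} (P : ℝ) (hn : n ≠ 0)
    (hμ : 0 < (μ (dynBall f x ε n)).toReal) :
    presSeq μ f φ x ε n = P - Real.log ((μ (dynBall f x ε n)).toReal /
      Real.exp (-(P * n) + birkhoffSum' f φ n x)) / n := by
  rw [presSeq, Real.log_div hμ.ne' (Real.exp_ne_zero _), Real.log_exp]
  field_simp
  ring

lemma IsWeakGibbs.ae_eventually_tendsto_presSeq {P : ℝ} (hG : IsWeakGibbs μ f φ P) :
    ∀ᵐ x ∂μ, ∀ᶠ ε in 𝓝[>] 0, Tendsto (presSeq μ f φ x ε) atTop (𝓝 P) := by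
  obtain ⟨ε₀, hε₀, Λ, hΛ, hbounds⟩ := hG
  filter_upwards [ae_iff.mpr hΛ] with x hx
  filter_upwards [Ioo_mem_nhdsGT hε₀] with ε hε
  obtain ⟨δ, hδ, hδlim, hδbd⟩ := hbounds ε hε.1 hε.2 x hx
  have hlog := tendsto_log_div_atTop_zero_of_inv_le_of_le hδ hδlim
    (fun n => (hδbd n).1) (fun n => (hδbd n).2)
  have hlim : Tendsto (fun n : ℕ => P - Real.log ((μ (dynBall f x ε n)).toReal /
      Real.exp (-(P * n) + birkhoffSum' f φ n x)) / n) atTop (𝓝 P) := by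
    simpa using (tendsto_const_nhds (x := P)).sub hlog
  refine hlim.congr' ?_
  filter_upwards [eventually_ne_atTop 0] with n hn
  have hμ : 0 < (μ (dynBall f x ε n)).toReal :=
    (div_pos_iff_of_pos_right (Real.exp_pos _)).mp
      ((inv_pos.mpr (hδ n)).trans_le (hδbd n).1)
  exact (presSeq_eq_sub_log_div P hn hμ).symm

lemma IsWeakGibbs.ae_eq_of_tendsto_limsup {P : ℝ} (hG : IsWeakGibbs μ f φ P) {p : X → ℝ}
    (hp : ∀ᵐ x ∂μ, Tendsto (fun ε : ℝ => limsup (presSeq μ f φ x ε) atTop) (𝓝[>] 0)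
      (𝓝 (p x))) :
    p =ᵐ[μ] fun _ => P := by
  filter_upwards [hG.ae_eventually_tendsto_presSeq, hp] with x hx hpx
  exact tendsto_nhds_unique hpx
    (tendsto_const_nhds.congr' (hx.mono fun ε hε => hε.limsup_eq.symm))

end

theorem weakGibbs_is_equilibrium_state_general {X : Type*} [MetricSpace X]
    [MeasurableSpace X]
    (μ : Measure X) [IsProbabilityMeasure μ]
    (f : X → X)
    (φ : X → ℝ)
    (Ptop : ℝ)   -- the topological pressure `P_top(f,φ)`, finite since `h_top(f) < ∞`
    (hKS : ℝ)    -- the metric entropy `h_μ(f)`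
    -- the local pressure formula (Theorem A), assumed: there is an integrable local
    -- pressure function whose μ-a.e. values are the limits over dynamical balls and
    -- whose integral is the metric pressure `h_μ(f) + ∫ φ dμ`:
    (P : X → ℝ)
    (hPlim : ∀ᵐ x ∂μ,
      Tendsto (fun ε : ℝ => limsup (fun n : ℕ => presSeq μ f φ x ε n) atTop)
        (𝓝[>] 0) (𝓝 (P x)) ∧
      Tendsto (fun ε : ℝ => liminf (fun n : ℕ => presSeq μ f φ x ε n) atTop)
        (𝓝[>] 0) (𝓝 (P x)))
    (hPeq : ∫ x, P x ∂μ = hKS + ∫ x, φ x ∂μ)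
    -- `μ` is a weak-Gibbs measure for `f` with respect to `φ`:
    (hGibbs : IsWeakGibbs μ f φ Ptop) :
    hKS + ∫ x, φ x ∂μ = Ptop := by
  have hP : P =ᵐ[μ] fun _ => Ptop := hGibbs.ae_eq_of_tendsto_limsup (hPlim.mono fun _ h => h.1)
  rw [← hPeq, integral_congr_ae hP, integral_const, probReal_univ, one_smul]

theorem weakGibbs_is_equilibrium_state {X : Type*} [MetricSpace X] [CompactSpace X]
    [MeasurableSpace X] [BorelSpace X]
    (μ : Measure X) [IsProbabilityMeasure μ] [NullSingletonClass μ]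
    (f : X → X) (hf : Continuous f) (hinv : MeasurePreserving f μ μ)
    (φ : X → ℝ) (hφ : Continuous φ)
    (htop : ℝ)   -- the (finite) topological entropy `h_top(f)`
    (Ptop : ℝ)   -- the topological pressure `P_top(f,φ)`, finite since `h_top(f) < ∞`
    (hKS : ℝ)    -- the metric entropy `h_μ(f)`
    -- the Variational Principle, assumed:
    (hVP : hKS + ∫ x, φ x ∂μ ≤ Ptop)
    -- the local pressure formula (Theorem A), assumed: there is an integrable local
    -- pressure function whose μ-a.e. values are the limits over dynamical balls and
    -- whose integral is the metric pressure `h_μ(f) + ∫ φ dμ`: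
    (P : X → ℝ)
    (hPlim : ∀ᵐ x ∂μ,
      Tendsto (fun ε : ℝ => limsup (fun n : ℕ => presSeq μ f φ x ε n) atTop)
        (𝓝[>] 0) (𝓝 (P x)) ∧
      Tendsto (fun ε : ℝ => liminf (fun n : ℕ => presSeq μ f φ x ε n) atTop)
        (𝓝[>] 0) (𝓝 (P x)))
    (hPint : Integrable P μ)
    (hPeq : ∫ x, P x ∂μ = hKS + ∫ x, φ x ∂μ)
    -- `μ` is a weak-Gibbs measure for `f` with respect to `φ`:
    (hGibbs : IsWeakGibbs μ f φ Ptop) :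
    hKS + ∫ x, φ x ∂μ = Ptop :=
  weakGibbs_is_equilibrium_state_general μ f φ Ptop hKS P hPlim hPeq hGibbs
end
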